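/- The binary operation on r(T(Σ)) defined by r(u)·r(v) := r(u·v) is well-defined (i.e. if r(u) = r(u') and r(v) = r(v') then r(u·v) = r(u'·v')) and associative, so that r(T(Σ)) is a monoid and the reduction map r is a surjective monoid homomorphism from T(Σ) onto r(T(Σ)). -/

import Mathlib

/-!  Common definitions: string trees over an alphabet (following
N. Schmidt, A. Patel, "Using Tree Automata and Regular Expressions to
Manipulate Hierarchically Structured Data").

Symbols: an ambient type `U` of "plain" symbols, extended with the two
angle brackets and the slash. -/

inductive TSym (U : Type) : Type where
  | op : TSym U          -- ⟨
  | cl : TSym U          -- ⟩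
  | slash : TSym U       -- /
  | ltr : U → TSym U     -- a plain symbol

namespace StringTree

variable {U V : Type}

/-- The letters of an alphabet `S ⊆ U`, viewed as (non-bracket) symbols. -/
def ltrs (S : Set U) : Set (TSym U) := {x | ∃ a ∈ S, x = TSym.ltr a}

/-- String trees over a set `S` of allowed non-bracket symbols:
`⟨⟩ ∈ T`, `⟨a⟩ ∈ T` for `a ∈ S`, closed under concatenation
`⟨x⟩·⟨y⟩ = ⟨xy⟩` and encapsulation `t ↦ ⟨t⟩`. -/
inductive IsTree (S : Set (TSym U)) : List (TSym U) → Prop where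
  | nil : IsTree S [TSym.op, TSym.cl]
  | single {x : TSym U} : x ∈ S → IsTree S [TSym.op, x, TSym.cl]
  | concat {x y : List (TSym U)} :
      IsTree S (TSym.op :: (x ++ [TSym.cl])) → IsTree S (TSym.op :: (y ++ [TSym.cl])) →
      IsTree S (TSym.op :: ((x ++ y) ++ [TSym.cl]))
  | encap {t : List (TSym U)} : IsTree S t → IsTree S (TSym.op :: (t ++ [TSym.cl]))

/-- `T(Σ)`, the set of string trees over the alphabet `Σ ⊆ U`. -/
def TreeSet (S : Set U) : Set (List (TSym U)) := {t | IsTree (ltrs S) t}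

/-- A plain string, viewed as a string of symbols. -/
def strOf (s : List U) : List (TSym U) := s.map TSym.ltr

/-- Move relation of a generalised non-deterministic finite string tree
automaton with initial states `Q0`, horizontal rules `Δ` and vertical
rules `γ`:
(a) `l⟨s⟩r ⇒ l⟨a/s⟩r` if `a ∈ Q0` (initial state assignment);
(b) `l⟨a/bs⟩r ⇒ l⟨c/s⟩r` if `(a,b) → c ∈ Δ` (horizontal move);
(c) `l⟨a/⟩r ⇒ lbr` if `b ∈ γ a` (vertical move). -/
inductive GMove (Q0 : Set U) (Δ : Set (U × U × U)) (γ : U → Set U) :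
    List (TSym U) → List (TSym U) → Prop where
  | init {l r : List (TSym U)} {s : List U} {a : U} :
      a ∈ Q0 →
      GMove Q0 Δ γ (l ++ [TSym.op] ++ strOf s ++ [TSym.cl] ++ r)
        (l ++ [TSym.op, TSym.ltr a, TSym.slash] ++ strOf s ++ [TSym.cl] ++ r)
  | horiz {l r : List (TSym U)} {s : List U} {a b c : U} :
      (a, b, c) ∈ Δ →
      GMove Q0 Δ γ (l ++ [TSym.op, TSym.ltr a, TSym.slash, TSym.ltr b] ++ strOf s ++ [TSym.cl] ++ r)
        (l ++ [TSym.op, TSym.ltr c, TSym.slash] ++ strOf s ++ [TSym.cl] ++ r)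
  | vert {l r : List (TSym U)} {a b : U} :
      b ∈ γ a →
      GMove Q0 Δ γ (l ++ [TSym.op, TSym.ltr a, TSym.slash, TSym.cl] ++ r)
        (l ++ [TSym.ltr b] ++ r)

/-- Move relation of an NFSTA: the GNFSTA moves with the single initial
state `q0` and with the vertical move `l⟨a/⟩r ⇒ lar`. -/
def NMove (q0 : U) (Δ : Set (U × U × U)) : List (TSym U) → List (TSym U) → Prop :=
  GMove {q0} Δ (fun a => {a})

/-- The final tree `⟨q/⟩`. -/
def finalTree (q : U) : List (TSym U) := [TSym.op, TSym.ltr q, TSym.slash, TSym.cl]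

/-- Acceptance by a GNFSTA: `t ⇒* ⟨q_f/⟩` for some `q_f ∈ Q_f`. -/
def GAccepts (Q0 : Set U) (Δ : Set (U × U × U)) (γ : U → Set U) (Qf : Set U)
    (t : List (TSym U)) : Prop :=
  ∃ qf ∈ Qf, Relation.ReflTransGen (GMove Q0 Δ γ) t (finalTree qf)

/-- The language of a GNFSTA: the set of trees of `T(Σ)` it accepts. -/
def GLang (Sa Q0 : Set U) (Δ : Set (U × U × U)) (γ : U → Set U) (Qf : Set U) :
    Set (List (TSym U)) :=
  {t | t ∈ TreeSet Sa ∧ GAccepts Q0 Δ γ Qf t}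

/-- Acceptance by an NFSTA. -/
def NAccepts (q0 : U) (Δ : Set (U × U × U)) (Qf : Set U) (t : List (TSym U)) : Prop :=
  GAccepts {q0} Δ (fun a => {a}) Qf t

/-- The language of an NFSTA. -/
def NLang (Sa : Set U) (q0 : U) (Δ : Set (U × U × U)) (Qf : Set U) : Set (List (TSym U)) :=
  GLang Sa {q0} Δ (fun a => {a}) Qf

/-- Well-formedness of a GNFSTA `(Σ, Q, Q_f, Q₀, Δ, γ)`:
`Q` is finite, `Σ ⊆ Q`, `Q_f ⊆ Q`, `Q₀ ⊆ Q`, the rules of `Δ` are over `Q`,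
and `γ` maps states of `Q` to sets of states of `Q`. -/
def GWF (Sa Q Qf Q0 : Set U) (Δ : Set (U × U × U)) (γ : U → Set U) : Prop :=
  Q.Finite ∧ Sa ⊆ Q ∧ Qf ⊆ Q ∧ Q0 ⊆ Q ∧
    (∀ p ∈ Δ, p.1 ∈ Q ∧ p.2.1 ∈ Q ∧ p.2.2 ∈ Q) ∧ (∀ q ∈ Q, γ q ⊆ Q)

/-- Well-formedness of an NFSTA `(Σ, Q, Q_f, q₀, Δ)`. -/
def NWF (Sa Q Qf : Set U) (q0 : U) (Δ : Set (U × U × U)) : Prop :=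
  Q.Finite ∧ Sa ⊆ Q ∧ Qf ⊆ Q ∧ q0 ∈ Q ∧ ∀ p ∈ Δ, p.1 ∈ Q ∧ p.2.1 ∈ Q ∧ p.2.2 ∈ Q

/-- A GNFSTA has pure states: no horizontal or vertical rule produces a
symbol of `Σ`, no horizontal rule has its state (first) component in `Σ`,
`γ(a) = ∅` for `a ∈ Σ`, and `Q₀ ∪ Q_f ⊆ Q ∖ Σ`. -/
def PureG (Sa Q Qf Q0 : Set U) (Δ : Set (U × U × U)) (γ : U → Set U) : Prop :=
  (∀ p ∈ Δ, p.1 ∉ Sa ∧ p.2.2 ∉ Sa) ∧ (∀ a ∈ Sa, γ a = ∅) ∧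
    (∀ q : U, ∀ p ∈ γ q, p ∉ Sa) ∧ Q0 ⊆ Q \ Sa ∧ Qf ⊆ Q \ Sa

/-- An NFSTA has pure states. -/
def PureN (Sa Q Qf : Set U) (q0 : U) (Δ : Set (U × U × U)) : Prop :=
  (∀ p ∈ Δ, p.1 ∉ Sa ∧ p.2.2 ∉ Sa) ∧ q0 ∈ Q \ Sa ∧ Qf ⊆ Q \ Sa


/-! Additional notions. -/

/-- `⟨s₀ t₁ s₁ ⋯ tₙ sₙ⟩`: the string tree assembled from a head string `s₀`
and a list of pairs `(tᵢ, sᵢ)` of a subtree and a following string. -/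
def flatRep (s0 : List U) (rest : List (List (TSym U) × List U)) : List (TSym U) :=
  TSym.op :: (strOf s0 ++ (rest.map (fun p => p.1 ++ strOf p.2)).flatten ++ [TSym.cl])

/-- The inner string of a tree `⟨x⟩`, i.e. `x`. -/
def innerStr (t : List (TSym U)) : List (TSym U) := (t.drop 1).dropLast

/-- Tree concatenation `⟨x⟩·⟨y⟩ = ⟨xy⟩`. -/
def tconc (u v : List (TSym U)) : List (TSym U) :=
  TSym.op :: ((innerStr u ++ innerStr v) ++ [TSym.cl])

/-- The null tree `⟨⟩`. -/
def nilTree : List (TSym U) := [TSym.op, TSym.cl]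

/-- `w` is a string over `Q ∪ {/}`. -/
def OverQSlash (Q : Set U) (w : List (TSym U)) : Prop :=
  ∀ x ∈ w, x = TSym.slash ∨ ∃ q ∈ Q, x = TSym.ltr q

/-- Renaming of symbols along a map of plain symbols. -/
def symRel (f : U → V) : TSym U → TSym V
  | TSym.op => TSym.op
  | TSym.cl => TSym.cl
  | TSym.slash => TSym.slash
  | TSym.ltr a => TSym.ltr (f a)

/-- Renaming of the symbols of a tree along a map of plain symbols. -/
def treeRel (f : U → V) (t : List (TSym U)) : List (TSym V) := t.map (symRel f)

/-- The injective renaming `a ↦ {a}`. -/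
def sing : U → Set U := fun a => {a}

/-- The vertical-rule function `γ` of a pure-state GNFSTA, extended by
`γ(a) = {a}` for `a ∈ Σ` and to sets by unions: `γ(b') = ⋃_{b ∈ b'} γ(b)`. -/
def gammaExt (Sa : Set U) (γ : U → Set U) (b' : Set U) : Set U :=
  {c | ∃ b ∈ b', c ∈ γ b ∨ (c = b ∧ b ∈ Sa)}

/-- The transition function of the subset construction:
`Δ'(a', b') = {c | (a,b) → c ∈ Δ, a ∈ a', b ∈ γ(b')}`. -/
def subsetDelta (Sa : Set U) (γ : U → Set U) (Δ : Set (U × U × U)) (a' b' : Set U) : Set U :=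
  {c | ∃ a ∈ a', ∃ b ∈ gammaExt Sa γ b', (a, b, c) ∈ Δ}

/-- The rule set of the subset-construction DFSTA, defined on pairs of
subsets of `Q`. -/
def subsetRules (Sa : Set U) (γ : U → Set U) (Δ : Set (U × U × U)) (Q : Set U) :
    Set (Set U × Set U × Set U) :=
  {x | x.1 ⊆ Q ∧ x.2.1 ⊆ Q ∧ x.2.2 = subsetDelta Sa γ Δ x.1 x.2.1}

/-- A rule set is deterministic: at most one rule per left-hand side. -/
def Deterministic {α : Type} (Δ : Set (α × α × α)) : Prop :=
  ∀ a b c₁ c₂, (a, b, c₁) ∈ Δ → (a, b, c₂) ∈ Δ → c₁ = c₂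

/-- `L` is recognised by some GNFSTA over the alphabet `Sa`. -/
def RecogG (Sa : Set U) (L : Set (List (TSym U))) : Prop :=
  ∃ Q Qf Q0 Δ γ, GWF Sa Q Qf Q0 Δ γ ∧ GLang Sa Q0 Δ γ Qf = L

/-- `L` is recognised by some NFSTA over the alphabet `Sa`. -/
def RecogN (Sa : Set U) (L : Set (List (TSym U))) : Prop :=
  ∃ Q Qf q0 Δ, NWF Sa Q Qf q0 Δ ∧ NLang Sa q0 Δ Qf = L

/-- `L` is recognised, after the injective alphabet renaming `a ↦ {a}`,
by some deterministic FSTA. -/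
def RecogD (Sa : Set U) (L : Set (List (TSym U))) : Prop :=
  ∃ (Q' Qf' : Set (Set U)) (q0' : Set U) (Δ' : Set (Set U × Set U × Set U)),
    NWF (sing '' Sa) Q' Qf' q0' Δ' ∧ Deterministic Δ' ∧
    NLang (sing '' Sa) q0' Δ' Qf' = treeRel sing '' L

/-- Runs of a classical finite (string) automaton with transition map `δ`. -/
inductive FASteps (δ : U → U → Set U) : U → List U → U → Prop where
  | nil (q : U) : FASteps δ q [] q
  | cons {q a p s q'} : p ∈ δ q a → FASteps δ p s q' → FASteps δ q (a :: s) q'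

/-- The language of a classical finite automaton `(Sa, Q, Q_f, q₀, δ)`. -/
def FALang (Sa : Set U) (δ : U → U → Set U) (q0 : U) (Qf : Set U) : Set (List U) :=
  {s | (∀ a ∈ s, a ∈ Sa) ∧ ∃ qf ∈ Qf, FASteps δ q0 s qf}

/-- `n`-fold composition of a relation: `relPow r n a b` iff `a ⇒ⁿ b`. -/
def relPow {α : Type} (r : α → α → Prop) : ℕ → α → α → Prop
  | 0, a, b => a = b
  | n + 1, a, c => ∃ b, r a b ∧ relPow r n b c


/-! Ranked terms and classical tree automata. -/

/-- Unranked terms (rose trees) over a symbol type `F`. -/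
inductive PreTerm (F : Type) : Type where
  | node : F → List (PreTerm F) → PreTerm F

/-- A term is well-ranked w.r.t. an arity function. -/
inductive WellRanked {F : Type} (ar : F → ℕ) : PreTerm F → Prop where
  | node {f : F} {ts : List (PreTerm F)} : ts.length = ar f →
      (∀ t ∈ ts, WellRanked ar t) → WellRanked ar (PreTerm.node f ts)

/-- The term-to-string-tree map `τ`:
`τ(f(t₁,…,t_p)) = ⟨f τ(t₁) ⋯ τ(t_p)⟩` (and `τ(a) = ⟨a⟩` for constants). -/
def tau {F : Type} : PreTerm F → List (TSym F)
  | PreTerm.node f ts =>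
      TSym.op :: TSym.ltr f :: ((ts.attach.map (fun x => tau x.1)).flatten ++ [TSym.cl])
  decreasing_by
    simp only [PreTerm.node.sizeOf_spec]
    have h := List.sizeOf_lt_of_mem x.2
    omega

/-- A term over the ranked alphabet given by symbols `Sa` and arities `ar`. -/
inductive GoodTerm (Sa : Set U) (ar : U → ℕ) : PreTerm U → Prop where
  | node {f : U} {ts : List (PreTerm U)} : f ∈ Sa → ts.length = ar f →
      (∀ t ∈ ts, GoodTerm Sa ar t) → GoodTerm Sa ar (PreTerm.node f ts)

/-- Bottom-up runs of a classical tree automaton with rules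
`f(q₁,…,qₙ) → q`: `CRun Δh t q` means the run assigns state `q` to `t`. -/
inductive CRun (Δh : Set (U × List U × U)) : PreTerm U → U → Prop where
  | node {f : U} {ts : List (PreTerm U)} {qs : List U} {q : U} :
      (f, qs, q) ∈ Δh → qs.length = ts.length →
      (∀ p ∈ ts.zip qs, CRun Δh p.1 p.2) →
      CRun Δh (PreTerm.node f ts) q

/-- The term language of a classical tree automaton. -/
def TermLang (Sa : Set U) (ar : U → ℕ) (Δh : Set (U × List U × U)) (Qhf : Set U) :
    Set (PreTerm U) :=
  {t | GoodTerm Sa ar t ∧ ∃ q ∈ Qhf, CRun Δh t q}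

/-! Vertical tree representation of strings. -/

def omegaRev : List U → List (TSym U)
  | [] => [TSym.op, TSym.cl]
  | a :: s => TSym.op :: (omegaRev s ++ [TSym.ltr a, TSym.cl])

/-- The vertical tree representation `ω(a₁⋯aₙ) = ⟨⟨⋯⟨⟩a₁⟩a₂⟩⋯aₙ⟩`,
defined by `ω(ε) = ⟨⟩` and `ω(sa) = ⟨ω(s)⟩·⟨a⟩`. -/
def omega (s : List U) : List (TSym U) := omegaRev s.reverse

/-! Regular string tree grammars. -/

/-- A regular expression is over the symbol set `S`. -/
def REOver (S : Set U) : RegularExpression U → Prop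
  | RegularExpression.zero => True
  | RegularExpression.epsilon => True
  | RegularExpression.char a => a ∈ S
  | RegularExpression.plus e₁ e₂ => REOver S e₁ ∧ REOver S e₂
  | RegularExpression.comp e₁ e₂ => REOver S e₁ ∧ REOver S e₂
  | RegularExpression.star e => REOver S e

/-- One derivation step of a regular string tree grammar with rule set `R`:
`lXr →_G l⟨x⟩r` whenever `X → ⟨e⟩ ∈ R` and `x ∈ ⟦e⟧`. -/
def GDeriv (R : Set (U × RegularExpression U)) (u v : List (TSym U)) : Prop :=
  ∃ (l r : List (TSym U)) (X : U) (e : RegularExpression U) (x : List U),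
    (X, e) ∈ R ∧ x ∈ e.matches' ∧
    u = l ++ [TSym.ltr X] ++ r ∧ v = l ++ (TSym.op :: (strOf x ++ [TSym.cl])) ++ r

/-- The language generated by a regular string tree grammar with axiom `S`:
all trees of `T(Σ)` derivable from `S`. -/
def GramLang (Sa : Set U) (S : U) (R : Set (U × RegularExpression U)) :
    Set (List (TSym U)) :=
  {t | t ∈ TreeSet Sa ∧ Relation.ReflTransGen (GDeriv R) [TSym.ltr S] t}

/-- Well-formedness of a regular string tree grammar `(Σ, N, S, R)`. -/
def GramWF (Sa N : Set U) (S : U) (R : Set (U × RegularExpression U)) : Prop :=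
  N.Finite ∧ Disjoint N Sa ∧ S ∈ N ∧ ∀ p ∈ R, p.1 ∈ N ∧ REOver (Sa ∪ N) p.2

/-! The map `Γ` and the instance relation `⊴` of the subset-construction
equivalence proof. -/

/-- `Γ` applies (the extension of) `γ` to every set-symbol that is not
immediately followed by a slash:
`Γ(ε)=ε`, `Γ(⟨s)=⟨Γ(s)`, `Γ(⟩s)=⟩Γ(s)`, `Γ(a/s)=a/Γ(s)`, `Γ(as)=γ(a)Γ(s)`. -/
def GammaMap (g : Set U → Set U) : List (TSym (Set U)) → List (TSym (Set U))
  | [] => []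
  | TSym.op :: s => TSym.op :: GammaMap g s
  | TSym.cl :: s => TSym.cl :: GammaMap g s
  | TSym.slash :: s => TSym.slash :: GammaMap g s
  | TSym.ltr a :: TSym.slash :: s => TSym.ltr a :: TSym.slash :: GammaMap g s
  | TSym.ltr a :: s => TSym.ltr (g a) :: GammaMap g s

/-- Symbol-wise instance relation: brackets and slashes match, and a plain
symbol is an element of the corresponding set-symbol. -/
inductive SymInst : TSym U → TSym (Set U) → Prop where
  | op : SymInst TSym.op TSym.op
  | cl : SymInst TSym.cl TSym.cl
  | slash : SymInst TSym.slash TSym.slash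
  | ltr {a : U} {A : Set U} : a ∈ A → SymInst (TSym.ltr a) (TSym.ltr A)

/-- `v ⊴ v'`: `v` is an instance of `v'`. -/
def Inst (v : List (TSym U)) (v' : List (TSym (Set U))) : Prop :=
  List.Forall₂ SymInst v v'

end StringTree

namespace StringTree

section Aux

variable {U : Type}

/-- Is a symbol a plain letter? -/
def isLtr : TSym U → Bool
  | TSym.ltr _ => true
  | _ => false

/-- A string that is empty or starts with an opening bracket. -/
def OpFlat (R : List (TSym U)) : Prop := R = [] ∨ ∃ R', R = TSym.op :: R'

lemma take_drop_strOf (L : List U) {R : List (TSym U)} (hR : OpFlat R) :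
    (strOf L ++ R).takeWhile isLtr = strOf L ∧ (strOf L ++ R).dropWhile isLtr = R := by
  induction L with
  | nil =>
    rcases hR with rfl | ⟨R', rfl⟩ <;> simp [strOf, isLtr]
  | cons a L ih =>
    simpa [strOf, isLtr, List.takeWhile_cons, List.dropWhile_cons] using ih

lemma opflat_flatten {L : List (List (TSym U))}
    (h : ∀ l ∈ L, ∃ w, l = TSym.op :: w) : OpFlat L.flatten := by
  induction L with
  | nil => exact Or.inl rfl
  | cons l L ih =>
    obtain ⟨w, rfl⟩ := h l (by simp)
    exact Or.inr ⟨w ++ L.flatten, by simp⟩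

/-- Goodness condition on the list of (subtree, string) pairs. -/
def GoodRest (Sa : Set U) (rest : List (List (TSym U) × List U)) : Prop :=
  ∀ q ∈ rest, q.1 ∈ TreeSet Sa ∧ ∀ a ∈ q.2, a ∈ Sa

/-- The inner part of a `flatRep`. -/
def restStr (rest : List (List (TSym U) × List U)) : List (TSym U) :=
  (rest.map (fun p => p.1 ++ strOf p.2)).flatten

lemma flatRep_eq (s0 : List U) (rest : List (List (TSym U) × List U)) :
    flatRep s0 rest = TSym.op :: ((strOf s0 ++ restStr rest) ++ [TSym.cl]) := by
  simp [flatRep, restStr, List.append_assoc]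

lemma innerStr_mk (w : List (TSym U)) :
    innerStr (TSym.op :: (w ++ [TSym.cl])) = w := by
  simp [innerStr]

/-- Merging two decompositions. -/
lemma merge {Sa : Set U} {s0 s0' : List U} {r1 r2 : List (List (TSym U) × List U)}
    (h0 : ∀ a ∈ s0, a ∈ Sa) (h0' : ∀ a ∈ s0', a ∈ Sa)
    (h1 : GoodRest Sa r1) (h2 : GoodRest Sa r2) :
    ∃ (s : List U) (rest : List (List (TSym U) × List U)),
      (∀ a ∈ s, a ∈ Sa) ∧ GoodRest Sa rest ∧
      strOf s ++ restStr rest = (strOf s0 ++ restStr r1) ++ (strOf s0' ++ restStr r2) ∧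
      s ++ (rest.map Prod.snd).flatten =
        (s0 ++ (r1.map Prod.snd).flatten) ++ (s0' ++ (r2.map Prod.snd).flatten) ∧
      rest.map Prod.fst = r1.map Prod.fst ++ r2.map Prod.fst := by
  rcases r1.eq_nil_or_concat with rfl | ⟨init, p, rfl⟩
  · refine ⟨s0 ++ s0', r2, ?_, h2, ?_, ?_, ?_⟩
    · intro a ha; rcases List.mem_append.1 ha with h | h
      exacts [h0 a h, h0' a h]
    · simp [strOf, restStr, List.append_assoc]
    · simp [List.append_assoc]
    · simp
  · obtain ⟨t, s⟩ := p
    have hts := h1 (t, s) (by simp)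
    refine ⟨s0, init ++ (t, s ++ s0') :: r2, h0, ?_, ?_, ?_, ?_⟩
    · intro q hq
      rcases List.mem_append.1 hq with h | h
      · exact h1 q (by simp only [List.concat_eq_append, List.mem_append]; exact Or.inl h)
      · rcases List.mem_cons.1 h with rfl | h
        · refine ⟨hts.1, ?_⟩
          intro a ha; rcases List.mem_append.1 ha with h | h
          exacts [hts.2 a h, h0' a h]
        · exact h2 q h
    · simp [restStr, strOf, List.append_assoc]
    · simp [List.append_assoc]
    · simp

/-- Every string tree admits a flat decomposition. -/
lemma exists_decomp {Sa : Set U} {t : List (TSym U)} (ht : t ∈ TreeSet Sa) :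
    ∃ (s0 : List U) (rest : List (List (TSym U) × List U)),
      (∀ a ∈ s0, a ∈ Sa) ∧ GoodRest Sa rest ∧ t = flatRep s0 rest := by
  induction ht with
  | nil =>
    exact ⟨[], [], by simp, fun q hq => by simp at hq, by simp [flatRep, strOf]⟩
  | @single x hx =>
    obtain ⟨a, ha, rfl⟩ := hx
    exact ⟨[a], [], by simpa using ha, fun q hq => by simp at hq,
      by simp [flatRep, strOf]⟩
  | @concat x y hx hy ihx ihy =>
    obtain ⟨s0, r1, h0, h1, hx'⟩ := ihx
    obtain ⟨s0', r2, h0', h2, hy'⟩ := ihy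
    rw [flatRep_eq] at hx' hy'
    have hx2 : x = strOf s0 ++ restStr r1 := by
      have := List.cons_injective.eq_iff.mp hx'
      exact List.append_cancel_right (by simpa using this)
    have hy2 : y = strOf s0' ++ restStr r2 := by
      have := List.cons_injective.eq_iff.mp hy'
      exact List.append_cancel_right (by simpa using this)
    obtain ⟨s, rest, hs, hrest, heq, -, -⟩ := merge h0 h0' h1 h2
    exact ⟨s, rest, hs, hrest, by rw [flatRep_eq, heq, hx2, hy2]⟩
  | @encap t ht ih =>
    refine ⟨[], [(t, [])], by simp, ?_, ?_⟩
    · intro q hq; simp at hq; subst hq; exact ⟨ht, by simp⟩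
    · simp [flatRep_eq, restStr, strOf]

/-- The candidate multiplication, defined purely in terms of the reduced
strings: concatenate the letter parts, then the subtree parts. -/
def mulOp (x y : List (TSym U)) : List (TSym U) :=
  TSym.op :: (((innerStr x).takeWhile isLtr ++ (innerStr y).takeWhile isLtr) ++
    ((innerStr x).dropWhile isLtr ++ (innerStr y).dropWhile isLtr) ++ [TSym.cl])

lemma shape_of_mem {Sa : Set U} {t : List (TSym U)} (ht : t ∈ TreeSet Sa) :
    ∃ x, t = TSym.op :: (x ++ [TSym.cl]) := by
  obtain ⟨s0, rest, -, -, rfl⟩ := exists_decomp ht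
  exact ⟨_, flatRep_eq s0 rest⟩

lemma tconc_mem {Sa : Set U} {u v : List (TSym U)}
    (hu : u ∈ TreeSet Sa) (hv : v ∈ TreeSet Sa) : tconc u v ∈ TreeSet Sa := by
  obtain ⟨x, rfl⟩ := shape_of_mem hu
  obtain ⟨y, rfl⟩ := shape_of_mem hv
  have : tconc (TSym.op :: (x ++ [TSym.cl])) (TSym.op :: (y ++ [TSym.cl])) =
      TSym.op :: ((x ++ y) ++ [TSym.cl]) := by
    simp [tconc, innerStr_mk]
  rw [this]
  exact IsTree.concat hu hv

lemma tconc_assoc (u v w : List (TSym U)) :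
    tconc (tconc u v) w = tconc u (tconc v w) := by
  simp only [tconc, innerStr_mk]
  simp [List.append_assoc]

lemma tconc_nil_left {Sa : Set U} {u : List (TSym U)} (hu : u ∈ TreeSet Sa) :
    tconc nilTree u = u := by
  obtain ⟨x, rfl⟩ := shape_of_mem hu
  have : innerStr (nilTree (U := U)) = [] := innerStr_mk []
  simp [tconc, this, innerStr_mk]

lemma tconc_nil_right {Sa : Set U} {u : List (TSym U)} (hu : u ∈ TreeSet Sa) :
    tconc u nilTree = u := by
  obtain ⟨x, rfl⟩ := shape_of_mem hu
  have : innerStr (nilTree (U := U)) = [] := innerStr_mk []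
  simp [tconc, this, innerStr_mk]

variable {Sa : Set U} {r : List (TSym U) → List (TSym U)}

section WithRec

variable (hrec : ∀ (s0 : List U) (rest : List (List (TSym U) × List U)),
    (∀ a ∈ s0, a ∈ Sa) → (∀ q ∈ rest, q.1 ∈ TreeSet Sa ∧ ∀ a ∈ q.2, a ∈ Sa) →
    r (flatRep s0 rest) =
      TSym.op :: (strOf (s0 ++ (rest.map Prod.snd).flatten) ++
        (rest.map (fun q => r q.1)).flatten ++ [TSym.cl]))

include hrec

lemma r_head {t : List (TSym U)} (ht : t ∈ TreeSet Sa) :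
    ∃ w, r t = TSym.op :: w := by
  obtain ⟨s0, rest, h0, h1, rfl⟩ := exists_decomp ht
  exact ⟨_, hrec s0 rest h0 h1⟩

lemma r_decomp {s0 : List U} {r1 : List (List (TSym U) × List U)}
    (h0 : ∀ a ∈ s0, a ∈ Sa) (h1 : GoodRest Sa r1) :
    (innerStr (r (flatRep s0 r1))).takeWhile isLtr
        = strOf (s0 ++ (r1.map Prod.snd).flatten) ∧
    (innerStr (r (flatRep s0 r1))).dropWhile isLtr
        = (r1.map (fun q => r q.1)).flatten := by
  set Ru := (r1.map (fun q => r q.1)).flatten with hRudef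
  have hRu : OpFlat Ru := by
    apply opflat_flatten
    intro l hl
    simp only [List.mem_map] at hl
    obtain ⟨q, hq, rfl⟩ := hl
    obtain ⟨w, hw⟩ := r_head hrec (h1 q hq).1
    exact ⟨w, hw⟩
  have hru : r (flatRep s0 r1) =
      TSym.op :: ((strOf (s0 ++ (r1.map Prod.snd).flatten) ++ Ru) ++ [TSym.cl]) := by
    rw [hrec s0 r1 h0 h1]
  have hin : innerStr (r (flatRep s0 r1)) =
      strOf (s0 ++ (r1.map Prod.snd).flatten) ++ Ru := by
    rw [hru, innerStr_mk]
  rw [hin]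
  exact take_drop_strOf _ hRu

lemma key {u v : List (TSym U)} (hu : u ∈ TreeSet Sa) (hv : v ∈ TreeSet Sa) :
    r (tconc u v) = mulOp (r u) (r v) := by
  obtain ⟨s0, r1, h0, h1, rfl⟩ := exists_decomp hu
  obtain ⟨s0', r2, h0', h2, rfl⟩ := exists_decomp hv
  obtain ⟨s, rest, hs, hrest, heq, heq2, heq3⟩ := merge h0 h0' h1 h2
  have htc : tconc (flatRep s0 r1) (flatRep s0' r2) = flatRep s rest := by
    rw [flatRep_eq s0 r1, flatRep_eq s0' r2, flatRep_eq s rest]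
    simp only [tconc, innerStr_mk]
    rw [heq]
  have hmm : ∀ (l : List (List (TSym U) × List U)),
      List.map r (l.map Prod.fst) = l.map (fun q => r q.1) := by
    intro l; simp only [List.map_map, Function.comp_def]
  have hflat : (rest.map (fun q => r q.1)).flatten =
      (r1.map (fun q => r q.1)).flatten ++ (r2.map (fun q => r q.1)).flatten := by
    rw [← hmm rest, heq3, List.map_append, List.flatten_append, hmm r1, hmm r2]
  obtain ⟨tu, du⟩ := r_decomp hrec h0 h1
  obtain ⟨tv, dv⟩ := r_decomp hrec h0' h2
  rw [htc, hrec s rest hs hrest, mulOp, tu, du, tv, dv, hflat, heq2]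
  simp [strOf, List.append_assoc]

end WithRec

end Aux

/-- The binary operation on `r(T(Σ))` defined by
`r(u)·r(v) := r(u·v)` is well-defined and associative, so that `r(T(Σ))` is a
monoid and the reduction map `r` is a surjective monoid homomorphism from
`T(Σ)` onto `r(T(Σ))`.  The reduction map is characterised by the recursion
`r(⟨s₀ t₁ s₁ ⋯ tₙ sₙ⟩) = ⟨s₀s₁⋯sₙ r(t₁) ⋯ r(tₙ)⟩`. -/
theorem reduction_monoid {U : Type} (Sa : Set U) (hSa : Sa.Finite)
    (r : List (TSym U) → List (TSym U))
    (hrec : ∀ (s0 : List U) (rest : List (List (TSym U) × List U)),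
      (∀ a ∈ s0, a ∈ Sa) → (∀ q ∈ rest, q.1 ∈ TreeSet Sa ∧ ∀ a ∈ q.2, a ∈ Sa) →
      r (flatRep s0 rest) =
        TSym.op :: (strOf (s0 ++ (rest.map Prod.snd).flatten) ++
          (rest.map (fun q => r q.1)).flatten ++ [TSym.cl])) :
    -- well-definedness of `r(u)·r(v) := r(u·v)`
    (∀ u u' v v' : List (TSym U), u ∈ TreeSet Sa → u' ∈ TreeSet Sa →
      v ∈ TreeSet Sa → v' ∈ TreeSet Sa → r u = r u' → r v = r v' →
      r (tconc u v) = r (tconc u' v')) ∧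
    -- the induced operation makes `r(T(Σ))` a monoid, with `r` a surjective
    -- monoid homomorphism onto it
    (∃ mul : List (TSym U) → List (TSym U) → List (TSym U),
      (∀ u ∈ TreeSet Sa, ∀ v ∈ TreeSet Sa, mul (r u) (r v) = r (tconc u v)) ∧
      (∀ x ∈ r '' TreeSet Sa, ∀ y ∈ r '' TreeSet Sa, ∀ z ∈ r '' TreeSet Sa,
        mul (mul x y) z = mul x (mul y z)) ∧
      (∀ x ∈ r '' TreeSet Sa, mul (r nilTree) x = x ∧ mul x (r nilTree) = x) ∧
      (∀ x ∈ r '' TreeSet Sa, ∃ u ∈ TreeSet Sa, r u = x)) := by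
  have hnil : nilTree (U := U) ∈ TreeSet Sa := IsTree.nil
  refine ⟨?_, mulOp, ?_, ?_, ?_, ?_⟩
  · intro u u' v v' hu hu' hv hv' h1 h2
    rw [key hrec hu hv, key hrec hu' hv', h1, h2]
  · intro u hu v hv
    exact (key hrec hu hv).symm
  · rintro x ⟨u, hu, rfl⟩ y ⟨v, hv, rfl⟩ z ⟨w, hw, rfl⟩
    calc mulOp (mulOp (r u) (r v)) (r w)
        = mulOp (r (tconc u v)) (r w) := by rw [key hrec hu hv]
      _ = r (tconc (tconc u v) w) := (key hrec (tconc_mem hu hv) hw).symm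
      _ = r (tconc u (tconc v w)) := by rw [tconc_assoc]
      _ = mulOp (r u) (r (tconc v w)) := key hrec hu (tconc_mem hv hw)
      _ = mulOp (r u) (mulOp (r v) (r w)) := by rw [key hrec hv hw]
  · rintro x ⟨u, hu, rfl⟩
    constructor
    · rw [← key hrec hnil hu, tconc_nil_left hu]
    · rw [← key hrec hu hnil, tconc_nil_right hu]
  · rintro x ⟨u, hu, rfl⟩
    exact ⟨u, hu, rfl⟩

end StringTree
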